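/- Let H be a complex Hilbert space, B its open unit ball, τ ∈ H a unit vector, f : B → H a mapping, {F_t}_{t≥0} a flow on B generated by f, and γ ∈ ℝ. If d_τ(F_t(x)) ≤ exp(−tγ) · d_τ(x) for all x ∈ B and all t ≥ 0, then 2 Re⟨f(x), x*⟩ ≥ γ for all x ∈ B. -/

import Mathlib

/-!
Differentiate the hypothesis `d_τ(F_t x) ≤ e^{-tγ} d_τ(x)` at `t = 0`, where both sides agree:
the right-hand side has derivative `-γ d_τ(x)`, while `x*` is exactly the logarithmic gradient
of `d_τ`, `d/dt d_τ(x + t v) = 2 Re⟨v, x*⟩ d_τ(x)`, so the left-hand side has derivative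
`-2 Re⟨f(x), x*⟩ d_τ(x)`. Dividing by `d_τ(x) > 0` gives the claim.
-/

open Filter Metric Topology

/-- The normalized support functional `x* = x/(1-‖x‖²) - τ/(1-⟨τ,x⟩)`,
where the inner product `⟨·,·⟩` of the paper is linear in the first variable,
i.e. `⟨a,b⟩ = inner b a` in Mathlib's convention. -/
noncomputable def xstar {H : Type*} [NormedAddCommGroup H] [InnerProductSpace ℂ H]
    (τ x : H) : H :=
  ((1 - (‖x‖ : ℂ) ^ 2)⁻¹) • x - ((1 - (inner ℂ x τ : ℂ))⁻¹) • τ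

/-- The non-Euclidean "distance" `d_τ(x) = |1 - ⟨x,τ⟩|² / (1 - ‖x‖²)`. -/
noncomputable def dtau {H : Type*} [NormedAddCommGroup H] [InnerProductSpace ℂ H]
    (τ x : H) : ℝ :=
  ‖(1 : ℂ) - (inner ℂ τ x : ℂ)‖ ^ 2 / (1 - ‖x‖ ^ 2)

theorem HasDerivWithinAt.le_of_le_on_Ici {u v : ℝ → ℝ} {u' v' a : ℝ}
    (hu : HasDerivWithinAt u u' (Set.Ici a) a) (hv : HasDerivWithinAt v v' (Set.Ici a) a)
    (ha : u a = v a) (hle : ∀ t ≥ a, u t ≤ v t) : u' ≤ v' := by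
  have hmin : IsLocalMinOn (v - u) (Set.Ici a) a :=
    IsMinOn.localize fun t ht => by simpa [ha] using hle t ht
  have hone : (1 : ℝ) ∈ posTangentConeAt (Set.Ici a) a :=
    mem_posTangentConeAt_of_segment_subset
      ((segment_eq_Icc (by linarith)).subset.trans Set.Icc_subset_Ici_self)
  simpa using hmin.hasFDerivWithinAt_nonneg (hv.sub hu).hasFDerivWithinAt hone

theorem Complex.sq_norm_mul_re_inv_mul (a z : ℂ) :
    ‖a‖ ^ 2 * (a⁻¹ * z).re = (starRingEnd ℂ a * z).re := by
  rcases eq_or_ne a 0 with rfl | ha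
  · simp
  · rw [← re_ofReal_mul, ofReal_pow, ← conj_mul', mul_assoc, mul_inv_cancel_left₀ ha]

section

variable {H : Type*} [NormedAddCommGroup H] [InnerProductSpace ℂ H]

theorem inner_xstar_left (τ x v : H) :
    inner ℂ (xstar τ x) v =
      ((1 - ‖x‖ ^ 2 : ℝ) : ℂ)⁻¹ * inner ℂ x v - (1 - inner ℂ τ x)⁻¹ * inner ℂ τ v := by
  simp [xstar, mul_comm]

theorem dtau_pos {τ x : H} (hτ : ‖τ‖ ≤ 1) (hx : ‖x‖ < 1) : 0 < dtau τ x := by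
  have hne : (1 : ℂ) - inner ℂ τ x ≠ 0 := by
    refine sub_ne_zero.2 fun h => ?_
    have := (norm_inner_le_norm (𝕜 := ℂ) τ x).trans (mul_le_of_le_one_left (norm_nonneg x) hτ)
    rw [← h, norm_one] at this
    linarith
  have : 0 < 1 - ‖x‖ ^ 2 := by nlinarith [norm_nonneg x]
  unfold dtau
  positivity

theorem hasFDerivAt_dtau (τ : H) {x : H} (hx : ‖x‖ ≠ 1) :
    HasFDerivAt (dtau τ)
      ((2 * dtau τ x) • Complex.reCLM.comp ((innerSL ℂ (xstar τ x)).restrictScalars ℝ)) x := by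
  let : InnerProductSpace ℝ H := InnerProductSpace.complexToReal
  have hnum : HasFDerivAt (fun y : H => ‖(1 : ℂ) - inner ℂ τ y‖ ^ 2)
      (2 • (innerSL ℝ ((1 : ℂ) - inner ℂ τ x)).comp (-((innerSL ℂ τ).restrictScalars ℝ))) x :=
    (((innerSL ℂ τ).restrictScalars ℝ).hasFDerivAt.const_sub (1 : ℂ)).norm_sq
  have hden : HasFDerivAt (fun y : H => 1 - ‖y‖ ^ 2) (-(2 • innerSL ℝ x)) x :=
    (hasStrictFDerivAt_norm_sq x).hasFDerivAt.const_sub 1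
  have hden0 : 1 - ‖x‖ ^ 2 ≠ 0 := fun h =>
    hx ((pow_eq_one_iff_of_nonneg (norm_nonneg x) two_ne_zero).1 (by linarith))
  refine (hnum.mul ((hasFDerivAt_inv hden0).comp x hden)).congr_fderiv ?_
  ext v
  have hre : inner ℝ x v = (inner ℂ x v).re := rfl
  have hconj : (-inner ℂ τ v * starRingEnd ℂ (1 - inner ℂ τ x)).re =
      -(‖1 - inner ℂ τ x‖ ^ 2 * ((1 - inner ℂ τ x)⁻¹ * inner ℂ τ v).re) := by
    rw [Complex.sq_norm_mul_re_inv_mul, neg_mul, Complex.neg_re, mul_comm]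
  simp only [add_apply, smul_apply, neg_apply, ContinuousLinearMap.comp_apply,
    ContinuousLinearMap.toSpanSingleton_apply, ContinuousLinearMap.coe_restrictScalars',
    innerSL_apply_apply, Complex.reCLM_apply, inner_xstar_left, Complex.sub_re,
    Complex.re_ofReal_mul, ← Complex.ofReal_inv, smul_eq_mul, nsmul_eq_mul, Function.comp_apply]
  rw [hre, Complex.inner, hconj, dtau]
  field_simp
  ring

end

theorem stmt5_general {H : Type*} [NormedAddCommGroup H] [InnerProductSpace ℂ H]
    (τ : H) (hτ : ‖τ‖ = 1) (f : H → H) (F : ℝ → H → H) (γ : ℝ)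
    (hF0 : ∀ x ∈ ball (0 : H) 1, F 0 x = x)
    (hFderiv : ∀ x ∈ ball (0 : H) 1, ∀ t ≥ (0 : ℝ),
      HasDerivWithinAt (fun s => F s x) (-(f (F t x))) (Set.Ici (0 : ℝ)) t)
    (hγ : ∀ x ∈ ball (0 : H) 1, ∀ t ≥ (0 : ℝ),
      dtau τ (F t x) ≤ Real.exp (-(t * γ)) * dtau τ x) :
    ∀ x ∈ ball (0 : H) 1, γ ≤ 2 * (inner ℂ (xstar τ x) (f x) : ℂ).re := by
  intro x hx
  have hx1 : ‖x‖ < 1 := mem_ball_zero_iff.mp hx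
  have hx0 : F 0 x = x := hF0 x hx
  have hd : HasDerivWithinAt (fun t => dtau τ (F t x))
      (-(2 * dtau τ x * (inner ℂ (xstar τ x) (f x)).re)) (Set.Ici 0) 0 := by
    have hF0x : ‖F 0 x‖ ≠ 1 := by rw [hx0]; exact hx1.ne
    have h := (hasFDerivAt_dtau τ hF0x).comp_hasDerivWithinAt 0 (hFderiv x hx 0 le_rfl)
    rw [hx0] at h
    exact h.congr_deriv (by simp [inner_neg_right])
  have hexp : HasDerivWithinAt (fun t => Real.exp (-(t * γ)) * dtau τ x)
      (-γ * dtau τ x) (Set.Ici 0) 0 := by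
    simpa using (((hasDerivAt_id 0).mul_const γ).neg.exp.mul_const (dtau τ x)).hasDerivWithinAt
  have hle := hd.le_of_le_on_Ici hexp (by simp [hx0]) (hγ x hx)
  nlinarith [dtau_pos hτ.le hx1]

theorem stmt5 {H : Type*} [NormedAddCommGroup H] [InnerProductSpace ℂ H] [CompleteSpace H]
    (τ : H) (hτ : ‖τ‖ = 1) (f : H → H) (F : ℝ → H → H) (γ : ℝ)
    (hF0 : ∀ x ∈ ball (0 : H) 1, F 0 x = x)
    (hFsemigroup : ∀ t ≥ (0 : ℝ), ∀ s ≥ (0 : ℝ), ∀ x ∈ ball (0 : H) 1,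
      F (t + s) x = F t (F s x))
    (hFmaps : ∀ t ≥ (0 : ℝ), ∀ x ∈ ball (0 : H) 1, F t x ∈ ball (0 : H) 1)
    (hFderiv : ∀ x ∈ ball (0 : H) 1, ∀ t ≥ (0 : ℝ),
      HasDerivWithinAt (fun s => F s x) (-(f (F t x))) (Set.Ici (0 : ℝ)) t)
    (hγ : ∀ x ∈ ball (0 : H) 1, ∀ t ≥ (0 : ℝ),
      dtau τ (F t x) ≤ Real.exp (-(t * γ)) * dtau τ x) :
    ∀ x ∈ ball (0 : H) 1, γ ≤ 2 * (inner ℂ (xstar τ x) (f x) : ℂ).re :=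
  stmt5_general τ hτ f F γ hF0 hFderiv hγ
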